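/- arXiv:2506.09401 — 2 statements merged into one kernel-verified Lean document; each statement's English description precedes it below -/
import Mathlib

section
/- Let S be a Polish space and N ≥ 1, and let κ_N : P(S) → P(P(S)) be the bootstrap (empirical-measure) kernel: κ_N(μ) is the pushforward of μ^{⊗N} under (x_1,…,x_N) ↦ (1/N)∑_{i=1}^N δ_{x_i}. Let (μ_n)_{n≥0} be a P(S)-valued Markov chain with kernel κ_N whose initial measure μ_0 is (almost surely) supported on a finite set. Then almost surely there exist a finite (random) time n₀ and a (random) point γ ∈ S such that μ_n = δ_γ for all n ≥ n₀; i.e., the collapse to a Dirac measure occurs in finite random time. -/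
/-! After one step the chain is an empirical measure of `N` points, so it has an atom of mass at
least `1/N`; the next step then draws all `N` samples at that atom, producing a Dirac measure, with
probability at least `N⁻ᴺ`. By Lévy's conditional Borel–Cantelli lemma the chain almost surely
reaches the set of Dirac measures. That set is absorbing, since `κ_N(δ_γ) = δ_{δ_γ}`, and it is a
countably separated Borel set, so almost surely the chain stays at the first Dirac measure it hits.
-/

open MeasureTheory Topology Filter BoundedContinuousFunction
open scoped ENNReal NNReal

/-- The empirical measure `(1/N) ∑ᵢ δ_{x i}` of a tuple `x : Fin N → S`, as a probability
measure (for `N ≥ 1`). -/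
noncomputable def empiricalMeasure {S : Type*} [MeasurableSpace S] {N : ℕ} (hN : 0 < N)
    (x : Fin N → S) : ProbabilityMeasure S :=
  ⟨(N : ℝ≥0∞)⁻¹ • ∑ i, Measure.dirac (x i), by
    constructor
    have h : (∑ i : Fin N, Measure.dirac (x i)) Set.univ = N := by
      rw [Measure.finset_sum_apply]
      simp
    rw [Measure.smul_apply, h, smul_eq_mul]
    exact ENNReal.inv_mul_cancel (by exact_mod_cast hN.ne') (by simp)⟩

theorem integral_empiricalMeasure {S : Type*} [MeasurableSpace S] [TopologicalSpace S]
    [OpensMeasurableSpace S] {N : ℕ} (hN : 0 < N) (y : Fin N → S) (f : S →ᵇ ℝ) :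
    ∫ a, f a ∂(empiricalMeasure hN y : Measure S) = (N : ℝ)⁻¹ * ∑ i, f (y i) := by
  change ∫ a, f a ∂((N : ℝ≥0∞)⁻¹ • ∑ i, Measure.dirac (y i)) = _
  rw [integral_smul_measure, integral_finset_sum_measure]
  · simp only [ENNReal.toReal_inv, ENNReal.toReal_natCast, smul_eq_mul]
    congr 1
    refine Finset.sum_congr rfl fun i _ => ?_
    exact integral_dirac' _ _ f.continuous.stronglyMeasurable
  · intro i _
    exact f.integrable _

/-- The map `x ↦ (1/N) ∑ᵢ δ_{x i}` is continuous into `P(S)` with the topology of weak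
convergence. -/
theorem continuous_empiricalMeasure {S : Type*} [MeasurableSpace S] [TopologicalSpace S]
    [OpensMeasurableSpace S] {N : ℕ} (hN : 0 < N) :
    Continuous (empiricalMeasure (S := S) hN) := by
  rw [continuous_iff_continuousAt]
  intro x
  unfold ContinuousAt
  rw [MeasureTheory.ProbabilityMeasure.tendsto_iff_forall_integral_tendsto]
  intro f
  simp only [fun y : Fin N → S => integral_empiricalMeasure hN y f]
  apply Filter.Tendsto.const_mul
  apply tendsto_finset_sum
  intro i _
  exact (f.continuous.comp (continuous_apply i)).continuousAt

/-- The bootstrap (empirical-measure) kernel `κ_N : P(S) → P(P(S))`: `bootstrapKernel hN μ`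
is the law of the empirical measure of `N` i.i.d. samples from `μ`, i.e. the pushforward of
the product measure `μ^{⊗N}` on `S^N` under the map `x ↦ (1/N) ∑ᵢ δ_{x i}`. -/
noncomputable def bootstrapKernel {S : Type*} [MeasurableSpace S] [TopologicalSpace S]
    [PolishSpace S] [BorelSpace S]
    [MeasurableSpace (ProbabilityMeasure S)] [BorelSpace (ProbabilityMeasure S)]
    {N : ℕ} (hN : 0 < N) (μ : ProbabilityMeasure S) :
    ProbabilityMeasure (ProbabilityMeasure S) :=
  ⟨(Measure.pi fun _ : Fin N => (μ : Measure S)).map (empiricalMeasure hN),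
    MeasureTheory.Measure.isProbabilityMeasure_map
      (continuous_empiricalMeasure hN).measurable.aemeasurable⟩

open Set TopologicalSpace

theorem Continuous.measurable_toMeasure {X Y : Type*} [MeasurableSpace X] [TopologicalSpace X]
    [PseudoMetrizableSpace X] [BorelSpace X] [TopologicalSpace Y] [MeasurableSpace Y]
    [OpensMeasurableSpace Y] {f : Y → ProbabilityMeasure X} (hf : Continuous f) :
    Measurable fun y => (f y : Measure X) := by
  refine .measure_of_isPiSystem_of_isProbabilityMeasure
    (BorelSpace.measurable_eq.trans borel_eq_generateFrom_isClosed) isPiSystem_isClosed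
    fun F hF => ?_
  exact measurable_of_tendsto_metrizable
    (fun n => ((ProbabilityMeasure.continuous_lintegral_boundedContinuousFunction _).comp
      hf).measurable)
    (tendsto_pi_nhds.2 fun y => HasOuterApproxClosed.tendsto_lintegral_apprSeq hF (f y))

structure IsMarkovChain {Ω X : Type*} {m0 : MeasurableSpace Ω} [MeasurableSpace X]
    (P : Measure Ω) (ℱ : Filtration ℕ m0) (κ : X → ProbabilityMeasure X) (μ : ℕ → Ω → X) :
    Prop where
  measurable : ∀ n, Measurable[ℱ n] (μ n)
  condExp_comp_succ : ∀ (n : ℕ) (g : X → ℝ), Measurable g → (∃ C : ℝ, ∀ x, |g x| ≤ C) →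
    P[(fun ω => g (μ (n + 1) ω)) | ℱ n] =ᵐ[P] fun ω => ∫ x, g x ∂(κ (μ n ω) : Measure X)

namespace IsMarkovChain

variable {Ω X : Type*} {m0 : MeasurableSpace Ω} [MeasurableSpace X] {P : Measure Ω}
  {ℱ : Filtration ℕ m0} {κ : X → ProbabilityMeasure X} {μ : ℕ → Ω → X}

theorem condExp_indicator_preimage_succ (hμ : IsMarkovChain P ℱ κ μ) {B : Set X}
    (hB : MeasurableSet B) (n : ℕ) :
    P[(μ (n + 1) ⁻¹' B).indicator 1 | ℱ n] =ᵐ[P] fun ω => (κ (μ n ω) : Measure X).real B := by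
  change P[fun ω => B.indicator 1 (μ (n + 1) ω) | ℱ n] =ᵐ[P] _
  have hg : Measurable (B.indicator (1 : X → ℝ)) := measurable_one.indicator hB
  have hbdd : ∃ C : ℝ, ∀ x, |B.indicator (1 : X → ℝ) x| ≤ C :=
    ⟨1, fun x => by by_cases hx : x ∈ B <;> simp [hx]⟩
  simpa only [integral_indicator_one hB] using hμ.condExp_comp_succ n _ hg hbdd

theorem ae_mem_succ_of_ae_kernel [IsFiniteMeasure P] (hμ : IsMarkovChain P ℱ κ μ) {n : ℕ}
    {A : Set Ω} (hA : MeasurableSet[ℱ n] A) {B : Set X} (hB : MeasurableSet B)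
    (h : ∀ ω ∈ A, ∀ᵐ x ∂(κ (μ n ω) : Measure X), x ∈ B) :
    ∀ᵐ ω ∂P, ω ∈ A → μ (n + 1) ω ∈ B := by
  have hmeas : Measurable (μ (n + 1)) := (hμ.measurable (n + 1)).mono (ℱ.le _) le_rfl
  have hzero : P.real (μ (n + 1) ⁻¹' Bᶜ ∩ A) = 0 := by
    calc P.real (μ (n + 1) ⁻¹' Bᶜ ∩ A)
        = ∫ ω in A, (μ (n + 1) ⁻¹' Bᶜ).indicator 1 ω ∂P := by
          rw [integral_indicator_one (hmeas hB.compl),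
            measureReal_restrict_apply (hmeas hB.compl)]
      _ = ∫ ω in A, P[(μ (n + 1) ⁻¹' Bᶜ).indicator 1 | ℱ n] ω ∂P :=
          (setIntegral_condExp (ℱ.le n) ((integrable_const 1).indicator (hmeas hB.compl)) hA).symm
      _ = ∫ ω in A, (κ (μ n ω) : Measure X).real Bᶜ ∂P :=
          setIntegral_congr_ae (ℱ.le n A hA)
            ((hμ.condExp_indicator_preimage_succ hB.compl n).mono fun ω h _ => h)
      _ = 0 := setIntegral_eq_zero_of_forall_eq_zero fun ω hω => by
          rw [measureReal_def, show (κ (μ n ω) : Measure X) Bᶜ = 0 from ae_iff.1 (h ω hω),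
            ENNReal.toReal_zero]
  rw [measureReal_eq_zero_iff] at hzero
  filter_upwards [measure_eq_zero_iff_ae_notMem.1 hzero] with ω hω hωA
  by_contra hωB
  exact hω ⟨hωB, hωA⟩

theorem ae_eq_succ_of_ae_kernel_eq [IsFiniteMeasure P] (hμ : IsMarkovChain P ℱ κ μ)
    {D : Set X} (hD : MeasurableSet D) [HasCountableSeparatingOn X MeasurableSet D]
    (hκ : ∀ x ∈ D, ∀ᵐ y ∂(κ x : Measure X), y = x) (n : ℕ) :
    ∀ᵐ ω ∂P, μ n ω ∈ D → μ (n + 1) ω = μ n ω := by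
  have hstay (U : Set X) (hU : MeasurableSet U) :
      ∀ᵐ ω ∂P, ω ∈ μ n ⁻¹' (D ∩ U) → μ (n + 1) ω ∈ U :=
    hμ.ae_mem_succ_of_ae_kernel (hμ.measurable n (hD.inter hU)) hU
      fun ω hω => (hκ _ hω.1).mono fun y hy => hy ▸ hω.2
  have hA : MeasurableSet (μ n ⁻¹' D) := ℱ.le n _ (hμ.measurable n hD)
  refine (ae_restrict_iff' hA).1 <| EventuallyEq.of_eventually_mem_of_forall_separating_mem_iff
    MeasurableSet ((ae_restrict_iff' hA).2 ((hstay D hD).mono fun ω h hω => h ⟨hω, hω⟩))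
    (ae_restrict_mem hA) fun U hU => (ae_restrict_iff' hA).2 ?_
  filter_upwards [hstay U hU, hstay Uᶜ hU.compl] with ω hU' hUc hω
  exact ⟨fun h => by_contra fun h' => hUc ⟨hω, h'⟩ h, fun h => hU' ⟨hω, h⟩⟩

theorem ae_frequently_mem [IsFiniteMeasure P] (hμ : IsMarkovChain P ℱ κ μ) {D : Set X}
    (hD : MeasurableSet D) {p : ℝ} (hp : 0 < p)
    (h : ∀ n, ∀ᵐ ω ∂P, p ≤ (κ (μ (n + 1) ω) : Measure X).real D) :
    ∀ᵐ ω ∂P, ∃ᶠ n in atTop, μ n ω ∈ D := by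
  filter_upwards [ae_mem_limsup_atTop_iff P fun n => hμ.measurable n hD,
    ae_all_iff.2 fun n => hμ.condExp_indicator_preimage_succ hD n, ae_all_iff.2 h]
    with ω hlimsup hcond hle
  refine mem_limsup_iff_frequently_mem.1 (hlimsup.2 ?_)
  simp_rw [hcond]
  refine (not_summable_iff_tendsto_nat_atTop_of_nonneg fun _ => measureReal_nonneg).1
    fun hsum => ?_
  obtain ⟨n, hn⟩ := ((tendsto_add_atTop_iff_nat 1).2 hsum.tendsto_atTop_zero
    |>.eventually (gt_mem_nhds hp)).exists
  exact (hle n).not_gt hn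

end IsMarkovChain

section Empirical

variable {S : Type*} [MeasurableSpace S] {N : ℕ} (hN : 0 < N)

theorem empiricalMeasure_const (γ : S) :
    empiricalMeasure hN (fun _ : Fin N => γ) = diracProba γ := by
  apply Subtype.ext
  change (N : ℝ≥0∞)⁻¹ • (∑ _i : Fin N, Measure.dirac γ) = Measure.dirac γ
  rw [Finset.sum_const, Finset.card_univ, Fintype.card_fin, ← Nat.cast_smul_eq_nsmul ℝ≥0∞,
    smul_smul, ENNReal.inv_mul_cancel (by exact_mod_cast hN.ne') (by simp), one_smul]

theorem inv_natCast_le_empiricalMeasure_singleton (x : Fin N → S) (i : Fin N) :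
    (N : ℝ≥0∞)⁻¹ ≤ (empiricalMeasure hN x : Measure S) {x i} := by
  change (N : ℝ≥0∞)⁻¹ ≤ ((N : ℝ≥0∞)⁻¹ • ∑ j, Measure.dirac (x j)) {x i}
  rw [Measure.smul_apply, Measure.finsetSum_apply, smul_eq_mul]
  calc (N : ℝ≥0∞)⁻¹ = (N : ℝ≥0∞)⁻¹ * Measure.dirac (x i) {x i} := by simp
    _ ≤ _ := by
      gcongr
      exact Finset.single_le_sum (f := fun j => Measure.dirac (x j) {x i})
        (fun _ _ => zero_le) (Finset.mem_univ i)

end Empirical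

section Bootstrap

variable {S : Type*} [MeasurableSpace S] [TopologicalSpace S] [PolishSpace S] [BorelSpace S]

theorem measurableSet_range_diracProba [MeasurableSpace (ProbabilityMeasure S)]
    [BorelSpace (ProbabilityMeasure S)] : MeasurableSet (range (diracProba (X := S))) :=
  measurableSet_range_of_continuous_injective continuous_diracProba injective_diracProba

instance : SecondCountableTopology (range (diracProba (X := S))) :=
  isEmbedding_diracProba.toHomeomorph.symm.isInducing.secondCountableTopology

variable [MeasurableSpace (ProbabilityMeasure S)] [BorelSpace (ProbabilityMeasure S)]
  {N : ℕ} (hN : 0 < N)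

theorem toMeasure_bootstrapKernel (ν : ProbabilityMeasure S) :
    (bootstrapKernel hN ν : Measure (ProbabilityMeasure S)) =
      (Measure.pi fun _ : Fin N => (ν : Measure S)).map (empiricalMeasure hN) :=
  rfl

theorem continuous_bootstrapKernel : Continuous (bootstrapKernel (S := S) hN) :=
  (ProbabilityMeasure.continuous_map (continuous_empiricalMeasure hN)).comp
    (ProbabilityMeasure.continuous_pi.comp (continuous_pi fun _ => continuous_id))

theorem measurable_measureReal_bootstrapKernel {B : Set (ProbabilityMeasure S)}
    (hB : MeasurableSet B) :
    Measurable fun ν : ProbabilityMeasure S =>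
      (bootstrapKernel hN ν : Measure (ProbabilityMeasure S)).real B :=
  ((Measure.measurable_coe hB).comp
    (continuous_bootstrapKernel hN).measurable_toMeasure).ennreal_toReal

theorem ae_bootstrapKernel_diracProba (γ : S) :
    ∀ᵐ ν ∂(bootstrapKernel hN (diracProba γ) : Measure (ProbabilityMeasure S)),
      ν = diracProba γ := by
  rw [toMeasure_bootstrapKernel]
  refine (ae_map_iff (continuous_empiricalMeasure hN).measurable.aemeasurable
    (measurableSet_singleton (diracProba γ))).2 ?_
  have hγ : ∀ᵐ y ∂(diracProba γ : Measure S), y = γ :=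
    (ae_dirac_iff (measurableSet_singleton γ)).2 rfl
  have hconst : ∀ᵐ x ∂(Measure.pi fun _ : Fin N => (diracProba γ : Measure S)), ∀ i, x i = γ :=
    ae_all_iff.2 fun i => (Measure.tendsto_eval_ae_ae (i := i)
      (μ := fun _ : Fin N => (diracProba γ : Measure S))).eventually hγ
  filter_upwards [hconst] with x hx
  rw [funext hx, empiricalMeasure_const]
  rfl

theorem measure_singleton_pow_le_bootstrapKernel (ν : ProbabilityMeasure S) (a : S) :
    (ν : Measure S) {a} ^ N ≤
      (bootstrapKernel hN ν : Measure (ProbabilityMeasure S)) (range diracProba) := by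
  have hsub : univ.pi (fun _ : Fin N => {a}) ⊆ empiricalMeasure hN ⁻¹' range diracProba := by
    intro x hx
    rw [mem_preimage, show x = fun _ => a from funext fun i => hx i (mem_univ i),
      empiricalMeasure_const]
    exact mem_range_self a
  calc (ν : Measure S) {a} ^ N
      = Measure.pi (fun _ : Fin N => (ν : Measure S)) (univ.pi fun _ => {a}) := by simp
    _ ≤ _ := by
      rw [toMeasure_bootstrapKernel, Measure.map_apply (continuous_empiricalMeasure hN).measurable
        measurableSet_range_diracProba]
      exact measure_mono hsub

theorem ae_inv_pow_le_bootstrapKernel (ν : ProbabilityMeasure S) :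
    ∀ᵐ ν' ∂(bootstrapKernel hN ν : Measure (ProbabilityMeasure S)),
      ((N : ℝ) ^ N)⁻¹ ≤
        (bootstrapKernel hN ν' : Measure (ProbabilityMeasure S)).real (range diracProba) := by
  rw [toMeasure_bootstrapKernel,
    ae_map_iff (continuous_empiricalMeasure hN).measurable.aemeasurable
      (measurableSet_le measurable_const
        (measurable_measureReal_bootstrapKernel hN measurableSet_range_diracProba))]
  refine ae_of_all _ fun x => ?_
  have hatom := (pow_le_pow_left₀ zero_le
    (inv_natCast_le_empiricalMeasure_singleton hN x ⟨0, hN⟩) N).trans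
    (measure_singleton_pow_le_bootstrapKernel hN _ (x ⟨0, hN⟩))
  rw [measureReal_def]
  calc ((N : ℝ) ^ N)⁻¹ = (((N : ℝ≥0∞)⁻¹) ^ N).toReal := by simp
    _ ≤ _ := ENNReal.toReal_mono (measure_ne_top _ _) hatom

end Bootstrap

theorem model_collapse_finite_time_general
    {S : Type*} [MeasurableSpace S] [TopologicalSpace S] [PolishSpace S] [BorelSpace S]
    [MeasurableSpace (ProbabilityMeasure S)] [BorelSpace (ProbabilityMeasure S)]
    {N : ℕ} (hN : 0 < N)
    {Ω : Type*} {m0 : MeasurableSpace Ω} (P : Measure Ω) [IsProbabilityMeasure P]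
    (ℱ : Filtration ℕ m0)
    (μ : ℕ → Ω → ProbabilityMeasure S)
    (hadp : ∀ n, Measurable[ℱ n] (μ n))
    (hMarkov : ∀ (n : ℕ) (g : ProbabilityMeasure S → ℝ), Measurable g →
      (∃ C : ℝ, ∀ ν, |g ν| ≤ C) →
      P[(fun ω => g (μ (n + 1) ω)) | ℱ n]
        =ᵐ[P] fun ω => ∫ ν, g ν ∂(bootstrapKernel hN (μ n ω) :
          Measure (ProbabilityMeasure S))) :
    ∀ᵐ ω ∂P, ∃ (n₀ : ℕ) (γ : S), ∀ n ≥ n₀,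
      μ n ω = (⟨Measure.dirac γ, inferInstance⟩ : ProbabilityMeasure S) := by
  have hμ : IsMarkovChain P ℱ (bootstrapKernel hN) μ := ⟨hadp, hMarkov⟩
  have hD : MeasurableSet (range (diracProba (X := S))) := measurableSet_range_diracProba
  have hstay : ∀ᵐ ω ∂P, ∀ n, μ n ω ∈ range diracProba → μ (n + 1) ω = μ n ω :=
    ae_all_iff.2 <| hμ.ae_eq_succ_of_ae_kernel_eq hD <| by
      rintro _ ⟨γ, rfl⟩
      exact ae_bootstrapKernel_diracProba hN γ
  have hhit : ∀ᵐ ω ∂P, ∃ᶠ n in atTop, μ n ω ∈ range diracProba :=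
    hμ.ae_frequently_mem hD (by positivity) fun n =>
      (hμ.ae_mem_succ_of_ae_kernel MeasurableSet.univ
        (measurableSet_le measurable_const (measurable_measureReal_bootstrapKernel hN hD))
        fun ω _ => ae_inv_pow_le_bootstrapKernel hN (μ n ω)).mono fun ω h => h trivial
  filter_upwards [hstay, hhit] with ω hstay hhit
  obtain ⟨n₀, γ, hγ⟩ := hhit.exists
  refine ⟨n₀, γ, fun n hn => ?_⟩
  induction n, hn using Nat.le_induction with
  | base => exact hγ.symm
  | succ n _ ih => exact (hstay n ⟨γ, ih.symm⟩).trans ih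

/-- Model collapse in finite time: if the initial measure of the bootstrap Markov chain
`(μ n)` is (almost surely) supported on a finite set, then almost surely there exist a finite
(random) time `n₀` and a (random) point `γ ∈ S` such that `μ n = δ_γ` for all `n ≥ n₀`. -/
theorem model_collapse_finite_time
    {S : Type*} [MeasurableSpace S] [TopologicalSpace S] [PolishSpace S] [BorelSpace S]
    [MeasurableSpace (ProbabilityMeasure S)] [BorelSpace (ProbabilityMeasure S)]
    {N : ℕ} (hN : 0 < N)
    {Ω : Type*} {m0 : MeasurableSpace Ω} (P : Measure Ω) [IsProbabilityMeasure P]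
    (ℱ : Filtration ℕ m0)
    (μ : ℕ → Ω → ProbabilityMeasure S)
    (hadp : ∀ n, Measurable[ℱ n] (μ n))
    (hMarkov : ∀ (n : ℕ) (g : ProbabilityMeasure S → ℝ), Measurable g →
      (∃ C : ℝ, ∀ ν, |g ν| ≤ C) →
      P[(fun ω => g (μ (n + 1) ω)) | ℱ n]
        =ᵐ[P] fun ω => ∫ ν, g ν ∂(bootstrapKernel hN (μ n ω) :
          Measure (ProbabilityMeasure S)))
    (hfinite : ∀ᵐ ω ∂P, ∃ F : Finset S, (μ 0 ω : Measure S) (↑F : Set S)ᶜ = 0) :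
    ∀ᵐ ω ∂P, ∃ (n₀ : ℕ) (γ : S), ∀ n ≥ n₀,
      μ n ω = (⟨Measure.dirac γ, inferInstance⟩ : ProbabilityMeasure S) :=
  model_collapse_finite_time_general hN P ℱ μ hadp hMarkov
end

section
/- Let S be a Polish space, N ≥ 1, and let κ_N : P(S) → P(P(S)) be the bootstrap (empirical-measure) kernel: κ_N(μ) is the pushforward of μ^{⊗N} under (x_1,…,x_N) ↦ (1/N)∑_{i=1}^N δ_{x_i}. Then μ ∈ P(S) is an absorbing state for κ_N, i.e., κ_N(μ) = δ_μ (the Dirac measure on P(S) concentrated at μ), if and only if μ = δ_x for some x ∈ S. In other words, the absorbing states of the purely generative recursive training chain are exactly the Dirac measures. -/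
/-!
If `κ_N(μ) = δ_μ`, then almost every sample `y` has empirical measure `μ`. Any one such sample
shows that `μ` has an atom at `a := y 0`, so the constant sample `(a, …, a)` has positive
`μ^{⊗N}`-mass and therefore also has empirical measure `μ`; that is, `μ = δ_a`. Conversely, for
`μ = δ_x` almost every sample is the constant sample `(x, …, x)`, whose empirical measure is `δ_x`.
-/

open MeasureTheory Topology Filter BoundedContinuousFunction
open scoped ENNReal NNReal

namespace MeasureTheory

theorem Measure.map_eq_dirac_iff {α β : Type*} [MeasurableSpace α] [MeasurableSpace β]
    [MeasurableSingletonClass β] {μ : Measure α} [IsProbabilityMeasure μ] {f : α → β}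
    (hf : Measurable f) (b : β) :
    μ.map f = Measure.dirac b ↔ ∀ᵐ a ∂μ, f a = b := by
  constructor
  · intro h
    have hb : ∀ᵐ y ∂μ.map f, y = b := by
      rw [h, ae_dirac_eq]
      exact eventually_pure.2 rfl
    exact ae_of_ae_map hf.aemeasurable hb
  · intro h
    rw [Measure.map_congr h, Measure.map_const, measure_univ, one_smul]

theorem Measure.ae_pi_dirac_eq {ι : Type*} [Fintype ι] {α : ι → Type*}
    [∀ i, MeasurableSpace (α i)] [∀ i, MeasurableSingletonClass (α i)] (x : ∀ i, α i) :
    ∀ᵐ y ∂Measure.pi (fun i => Measure.dirac (x i)), y = x := by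
  have hcoord : ∀ i, ∀ᵐ z ∂Measure.dirac (x i), z = x i := fun i => by
    rw [ae_dirac_eq]
    exact eventually_pure.2 rfl
  filter_upwards [Measure.ae_pi_le_pi (Filter.eventually_pi hcoord)] with y hy
  exact funext hy

end MeasureTheory

theorem Filter.Eventually.of_measure_singleton_ne_zero {α : Type*} [MeasurableSpace α]
    {μ : Measure α} {p : α → Prop} (h : ∀ᵐ a ∂μ, p a) {a : α} (ha : μ {a} ≠ 0) : p a := by
  by_contra hpa
  exact ha (measure_mono_null (Set.singleton_subset_iff.2 hpa) (ae_iff.1 h))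

section Empirical

variable {S : Type*} [MeasurableSpace S] {N : ℕ} (hN : 0 < N)

theorem empiricalMeasure_const_s14 (a : S) :
    empiricalMeasure hN (fun _ => a)
      = (⟨Measure.dirac a, inferInstance⟩ : ProbabilityMeasure S) := by
  apply Subtype.ext
  change (N : ℝ≥0∞)⁻¹ • ∑ _i : Fin N, Measure.dirac a = Measure.dirac a
  rw [Finset.sum_const, Finset.card_univ, Fintype.card_fin,
    ← Nat.cast_smul_eq_nsmul ℝ≥0∞, smul_smul,
    ENNReal.inv_mul_cancel (by exact_mod_cast hN.ne') (by simp), one_smul]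

theorem empiricalMeasure_apply_singleton_ne_zero (y : Fin N → S) (i : Fin N) :
    (empiricalMeasure hN y : Measure S) {y i} ≠ 0 := by
  change ((N : ℝ≥0∞)⁻¹ • ∑ j, Measure.dirac (y j)) {y i} ≠ 0
  rw [Measure.smul_apply, smul_eq_mul, Measure.finsetSum_apply]
  refine mul_ne_zero (by simp) fun hsum => ?_
  have hi := (Finset.sum_eq_zero_iff.1 hsum) i (Finset.mem_univ i)
  rw [Measure.dirac_apply_of_mem (Set.mem_singleton (y i))] at hi
  exact one_ne_zero hi

end Empirical

theorem bootstrapKernel_eq_dirac_iff {S : Type*} [MeasurableSpace S] [TopologicalSpace S]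
    [PolishSpace S] [BorelSpace S]
    [MeasurableSpace (ProbabilityMeasure S)] [BorelSpace (ProbabilityMeasure S)]
    {N : ℕ} (hN : 0 < N) (μ : ProbabilityMeasure S) :
    bootstrapKernel hN μ
        = (⟨Measure.dirac μ, inferInstance⟩ : ProbabilityMeasure (ProbabilityMeasure S))
      ↔ ∀ᵐ y ∂Measure.pi (fun _ : Fin N => (μ : Measure S)), empiricalMeasure hN y = μ := by
  rw [← Measure.map_eq_dirac_iff (continuous_empiricalMeasure hN).measurable]
  exact Subtype.ext_iff

/-- `μ ∈ P(S)` is an absorbing state of the bootstrap kernel, i.e. `κ_N(μ) = δ_μ` in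
`P(P(S))`, if and only if `μ` is a Dirac measure `δ_x` for some `x ∈ S`: the absorbing states
of the purely generative recursive training chain are exactly the Dirac measures. -/
theorem bootstrapKernel_absorbing_iff_dirac
    {S : Type*} [MeasurableSpace S] [TopologicalSpace S] [PolishSpace S] [BorelSpace S]
    [MeasurableSpace (ProbabilityMeasure S)] [BorelSpace (ProbabilityMeasure S)]
    {N : ℕ} (hN : 0 < N) (μ : ProbabilityMeasure S) :
    bootstrapKernel hN μ
        = (⟨Measure.dirac μ, inferInstance⟩ : ProbabilityMeasure (ProbabilityMeasure S))
      ↔ ∃ x : S, μ = (⟨Measure.dirac x, inferInstance⟩ : ProbabilityMeasure S) := by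
  rw [bootstrapKernel_eq_dirac_iff]
  constructor
  · intro hae
    obtain ⟨y, hy⟩ := hae.exists
    let a := y ⟨0, hN⟩
    have hatom : Measure.pi (fun _ : Fin N => (μ : Measure S)) {fun _ => a} ≠ 0 := by
      rw [Measure.pi_singleton, ← hy]
      exact Finset.prod_ne_zero_iff.2 fun _ _ => empiricalMeasure_apply_singleton_ne_zero hN y _
    exact ⟨a, by rw [← hae.of_measure_singleton_ne_zero hatom, empiricalMeasure_const_s14]⟩
  · rintro ⟨x, rfl⟩
    filter_upwards [Measure.ae_pi_dirac_eq fun _ : Fin N => x] with y hy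
    rw [hy, empiricalMeasure_const_s14]
end
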